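/- arXiv:0805.3011 — 2 statements merged into one kernel-verified Lean document; each statement's English description precedes it below -/
import Mathlib

section
/- On a uniform rectangular grid with mesh sizes h_x > 0 and h_y > 0, consider the checkerboard function u : ℤ×ℤ → ℝ defined by u_{i,j} = (−1)^{i+j}, with edge values given by the arithmetic mean of the two adjacent cell values (so u_σ = 0 on every interior edge). Then for every cell K_{i,j} and each of its four edges σ, the stabilized discrete gradient ∇_{K,σ} u := ∇_K u + R_{K,σ} u · n_{K,σ} is nonzero. For instance, for the right edge σ between K_{i,j} and K_{i+1,j} one has d_{K,σ} = h_x/2, x_σ − x_K = (h_x/2, 0), n_{K,σ} = (1,0), ∇_K u = (0,0), and R_{K,σ} u = (√2/(h_x/2))·(u_σ − u_{i,j} − ⟨∇_K u,(h_x/2,0)⟩) = −(2√2/h_x)(−1)^{i+j} ≠ 0, so ∇_{K,σ} u = −(2√2/h_x)(−1)^{i+j} (1,0) ≠ (0,0). -/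
/-! Every neighbour of a checkerboard cell carries the opposite value, so the centered gradient
vanishes and every mean edge value is `0`. The residual on an edge at distance `d` is then
`-(√2 / d) u_K ≠ 0`, and the stabilized gradient is this multiple of the unit normal. -/

/-- Centered discrete cell gradient on a uniform rectangular grid. -/
noncomputable def gradK (hx hy : ℝ) (u : ℤ × ℤ → ℝ) (i j : ℤ) : ℝ × ℝ :=
  ((u (i + 1, j) - u (i - 1, j)) / (2 * hx),
   (u (i, j + 1) - u (i, j - 1)) / (2 * hy))

/-- Consistency residual `R_{K,σ} u = (√2 / d_{K,σ})(u_σ − u_K − ⟨∇_K u, x_σ − x_K⟩)`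
of cell `K_{i,j}` at an edge `σ` with value `uσ`, distance `dKσ` from the cell
center to the edge, and `dx = x_σ − x_K`. -/
noncomputable def resid (hx hy : ℝ) (u : ℤ × ℤ → ℝ) (i j : ℤ)
    (uσ dKσ : ℝ) (dx : ℝ × ℝ) : ℝ :=
  (Real.sqrt 2 / dKσ) *
    (uσ - u (i, j) - ((gradK hx hy u i j).1 * dx.1 + (gradK hx hy u i j).2 * dx.2))

/-- Stabilized discrete gradient `∇_{K,σ} u = ∇_K u + R_{K,σ} u · n_{K,σ}`. -/
noncomputable def stabGrad (hx hy : ℝ) (u : ℤ × ℤ → ℝ) (i j : ℤ)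
    (uσ dKσ : ℝ) (dx n : ℝ × ℝ) : ℝ × ℝ :=
  gradK hx hy u i j + (resid hx hy u i j uσ dKσ dx) • n

theorem neg_one_zpow_eq_neg_of_odd_sub {R : Type*} [DivisionRing R] {m n : ℤ}
    (h : Odd (m - n)) : (-1 : R) ^ m = -(-1 : R) ^ n := by
  rw [← sub_add_cancel m n, zpow_add₀ (by norm_num), h.neg_one_zpow, neg_one_mul]

section StabilizedGradient

variable {hx hy : ℝ} {u : ℤ × ℤ → ℝ} {i j : ℤ}

theorem gradK_eq_zero_of_symm (hx_sym : u (i + 1, j) = u (i - 1, j))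
    (hy_sym : u (i, j + 1) = u (i, j - 1)) : gradK hx hy u i j = 0 := by
  simp [gradK, hx_sym, hy_sym]

theorem stabGrad_of_gradK_eq_zero (h : gradK hx hy u i j = 0) (uσ d : ℝ) (dx n : ℝ × ℝ) :
    stabGrad hx hy u i j uσ d dx n = (Real.sqrt 2 / d * (uσ - u (i, j))) • n := by
  simp [stabGrad, resid, h]

theorem stabGrad_mean_of_neighbor_eq_neg (h : gradK hx hy u i j = 0) {v : ℝ}
    (hv : v = -u (i, j)) (d : ℝ) (dx n : ℝ × ℝ) :
    stabGrad hx hy u i j ((u (i, j) + v) / 2) d dx n = (-(Real.sqrt 2 / d) * u (i, j)) • n := by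
  rw [stabGrad_of_gradK_eq_zero h, hv]
  ring_nf

end StabilizedGradient

theorem checkerboard_eq_neg_of_odd {u : ℤ × ℤ → ℝ}
    (hu : ∀ p : ℤ × ℤ, u p = (-1 : ℝ) ^ (p.1 + p.2)) {p q : ℤ × ℤ}
    (h : Odd (p.1 + p.2 - (q.1 + q.2))) : u p = -u q := by
  rw [hu, hu]
  exact neg_one_zpow_eq_neg_of_odd_sub h

/-- for the checkerboard function `u_{i,j} = (−1)^{i+j}` with edge
values given by the arithmetic mean of the two adjacent cell values, the
stabilized discrete gradient is nonzero on every cell and every one of its four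
edges; for the right edge it equals `−(2√2/h_x)(−1)^{i+j} (1,0)`. -/
theorem stmt4 (hx hy : ℝ) (hhx : 0 < hx) (hhy : 0 < hy)
    (u : ℤ × ℤ → ℝ) (hu : ∀ p : ℤ × ℤ, u p = (-1 : ℝ) ^ (p.1 + p.2)) :
    ∀ i j : ℤ,
      -- right edge
      stabGrad hx hy u i j ((u (i, j) + u (i + 1, j)) / 2) (hx / 2)
          (hx / 2, 0) (1, 0) ≠ (0, 0) ∧
      -- left edge
      stabGrad hx hy u i j ((u (i, j) + u (i - 1, j)) / 2) (hx / 2)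
          (-(hx / 2), 0) (-1, 0) ≠ (0, 0) ∧
      -- top edge
      stabGrad hx hy u i j ((u (i, j) + u (i, j + 1)) / 2) (hy / 2)
          (0, hy / 2) (0, 1) ≠ (0, 0) ∧
      -- bottom edge
      stabGrad hx hy u i j ((u (i, j) + u (i, j - 1)) / 2) (hy / 2)
          (0, -(hy / 2)) (0, -1) ≠ (0, 0) ∧
      -- explicit value on the right edge
      stabGrad hx hy u i j ((u (i, j) + u (i + 1, j)) / 2) (hx / 2)
          (hx / 2, 0) (1, 0)
        = (-(2 * Real.sqrt 2 / hx) * (-1 : ℝ) ^ (i + j)) • ((1 : ℝ), (0 : ℝ)) := by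
  intro i j
  have right : u (i + 1, j) = -u (i, j) := checkerboard_eq_neg_of_odd hu ⟨0, by ring⟩
  have left : u (i - 1, j) = -u (i, j) := checkerboard_eq_neg_of_odd hu ⟨-1, by ring⟩
  have top : u (i, j + 1) = -u (i, j) := checkerboard_eq_neg_of_odd hu ⟨0, by ring⟩
  have bottom : u (i, j - 1) = -u (i, j) := checkerboard_eq_neg_of_odd hu ⟨-1, by ring⟩
  have hgrad : gradK hx hy u i j = 0 :=
    gradK_eq_zero_of_symm (right.trans left.symm) (top.trans bottom.symm)
  have hne : ∀ d : ℝ, 0 < d → ∀ n : ℝ × ℝ, n ≠ 0 → (-(Real.sqrt 2 / d) * u (i, j)) • n ≠ 0 :=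
    fun d hd n hn => smul_ne_zero (mul_ne_zero (neg_ne_zero.2 (by positivity))
      (by rw [hu]; exact zpow_ne_zero _ (by norm_num))) hn
  simp only [stabGrad_mean_of_neighbor_eq_neg hgrad right,
    stabGrad_mean_of_neighbor_eq_neg hgrad left, stabGrad_mean_of_neighbor_eq_neg hgrad top,
    stabGrad_mean_of_neighbor_eq_neg hgrad bottom, Prod.mk_zero_zero]
  refine ⟨hne _ (by positivity) _ (by simp), hne _ (by positivity) _ (by simp),
    hne _ (by positivity) _ (by simp), hne _ (by positivity) _ (by simp), ?_⟩
  rw [hu]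
  congr 2
  field_simp
end

section
/- Let M be a finite set and F : M × M → ℝ be antisymmetric, i.e. F(K,L) = −F(L,K) for all K, L ∈ M, and assume the per-cell mass balance ∑_{L∈M} F(K,L) = 0 for every K ∈ M. Then for every w : M → ℝ, ∑_{K∈M} w(K) · ( ∑_{L∈M} F(K,L) · (w(K) + w(L))/2 ) = 0; that is, the centered discrete convective transport contributes nothing to the discrete kinetic (or thermal) energy balance. -/
open Finset in
/-- for an antisymmetric flux satisfying the per-cell mass
balance, the centered discrete convective transport contributes nothing to the
discrete kinetic (or thermal) energy balance. -/
theorem stmt10 (M : Type*) [Fintype M] (F : M → M → ℝ)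
    (hF : ∀ K L : M, F K L = -F L K)
    (hmass : ∀ K : M, ∑ L : M, F K L = 0) (w : M → ℝ) :
    ∑ K : M, w K * (∑ L : M, F K L * ((w K + w L) / 2)) = 0 := by
  have key : ∀ K : M, w K * (∑ L : M, F K L * ((w K + w L) / 2))
      = ∑ L : M, F K L * (w K * w L / 2) := by
    intro K
    rw [Finset.mul_sum]
    have : ∑ L : M, w K * (F K L * ((w K + w L) / 2))
        = ∑ L : M, (F K L * (w K * w K / 2) + F K L * (w K * w L / 2)) := by
      apply Finset.sum_congr rfl; intro L _; ring
    rw [this, Finset.sum_add_distrib, ← Finset.sum_mul, hmass K, zero_mul, zero_add]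
  rw [Finset.sum_congr rfl fun K _ => key K]
  have h2 : ∑ K : M, ∑ L : M, F K L * (w K * w L / 2)
      = -∑ K : M, ∑ L : M, F K L * (w K * w L / 2) := by
    conv_lhs => rw [Finset.sum_comm]
    rw [← Finset.sum_neg_distrib]
    apply Finset.sum_congr rfl; intro K _
    rw [← Finset.sum_neg_distrib]
    apply Finset.sum_congr rfl; intro L _
    rw [hF L K]; ring
  linarith
end
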